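/- arXiv:math/0604156 — 2 statements merged into one kernel-verified Lean document; each statement's English description precedes it below -/
import Mathlib

section
/- For every h ∈ ω^ω there exists h* ∈ ω^ω such that 𝔩'_h ≤ 𝔩_{h*}, where 𝔩'_h is defined like 𝔩_h but with covering slaloms required to lie in S^+ = {φ ∈ S : lim_{n→∞} |φ(n)|/2^n = 0}. Consequently sup{𝔩'_h : h ∈ ω^ω} = sup{𝔩_h : h ∈ ω^ω}. -/
open Filter

abbrev Slalom := ℕ → Finset ℕ

def SqS (φ ψ : Slalom) : Prop := ∀ᶠ n in atTop, φ n ⊆ ψ n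

def fSq (f : ℕ → ℕ) (φ : Slalom) : Prop := ∀ᶠ n in atTop, f n ∈ φ n

def SPlus (φ : Slalom) : Prop :=
  (∀ n, (φ n).card ≤ 2 ^ n) ∧
  Tendsto (fun n => ((φ n).card : ℝ) / 2 ^ n) atTop (nhds 0)

def ThetaWitness (h : ℕ → ℕ) (Φ : Set Slalom) : Prop :=
  (∀ φ ∈ Φ, ∀ n, (φ n).card ≤ h n - 1) ∧
  (∀ φ ∈ Φ, ∀ ψ ∈ Φ, SqS φ ψ ∨ SqS ψ φ) ∧
  Φ.WellFoundedOn (fun a b => SqS a b ∧ ¬ SqS b a) ∧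
  (∀ f : ℕ → ℕ, (∀ n, f n < h n) → ∃ φ ∈ Φ, fSq f φ)

open Classical in
noncomputable def theta (h : ℕ → ℕ) : Cardinal :=
  if ∃ Φ, ThetaWitness h Φ then
    sInf {c | ∃ Φ, ThetaWitness h Φ ∧ Cardinal.mk Φ = c}
  else Order.succ Cardinal.continuum

noncomputable def thetaStar : Cardinal :=
  ⨅ h : {h : ℕ → ℕ // ∀ n, 2 ≤ h n}, theta h.1

noncomputable def lcal (h : ℕ → ℕ) : Cardinal :=
  sInf {c | ∃ Φ : Set Slalom, (∀ φ ∈ Φ, ∀ n, (φ n).card ≤ 2 ^ n) ∧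
    (∀ f : ℕ → ℕ, (∀ n, f n < h n) → ∃ φ ∈ Φ, fSq f φ) ∧ Cardinal.mk Φ = c}

noncomputable def lcal' (h : ℕ → ℕ) : Cardinal :=
  sInf {c | ∃ Φ : Set Slalom, (∀ φ ∈ Φ, SPlus φ) ∧
    (∀ f : ℕ → ℕ, (∀ n, f n < h n) → ∃ φ ∈ Φ, fSq f φ) ∧ Cardinal.mk Φ = c}

def H1 : ℕ → ℕ := fun n => 2 ^ n + 1

/-!
Code two consecutive coordinates of `f ∈ ∏ h` as the single number
`f (2m) + h (2m) * f (2m+1) < h (2m) * h (2m+1)`. A slalom `φ ∈ S` capturing the codes decodes,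
coordinatewise, into a slalom `ψ` for `h` with `|ψ n| ≤ |φ (n / 2)| ≤ 2 ^ (n / 2)`, so
`|ψ n| / 2 ^ n → 0` and `ψ ∈ S⁺`. Hence `h* m = h (2m) * h (2m+1)` works.
-/

def IsCovering (h : ℕ → ℕ) (Φ : Set Slalom) : Prop :=
  ∀ f : ℕ → ℕ, (∀ n, f n < h n) → ∃ φ ∈ Φ, fSq f φ

lemma isCovering_range_singleton (h : ℕ → ℕ) :
    IsCovering h (Set.range fun (f : ℕ → ℕ) n => ({f n} : Finset ℕ)) :=
  fun f _ => ⟨_, ⟨f, rfl⟩, .of_forall fun n => Finset.mem_singleton_self (f n)⟩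

lemma sPlus_of_card_le_two_pow_half {φ : Slalom} (hφ : ∀ n, (φ n).card ≤ 2 ^ (n / 2)) :
    SPlus φ := by
  refine ⟨fun n => (hφ n).trans (Nat.pow_le_pow_right two_pos (Nat.div_le_self n 2)), ?_⟩
  have hbound : ∀ n, ((φ n).card : ℝ) / 2 ^ n ≤ (1 / 2 : ℝ) ^ (n / 2) := by
    intro n
    have hnat : (φ n).card * 2 ^ (n / 2) ≤ 2 ^ n :=
      calc (φ n).card * 2 ^ (n / 2) ≤ 2 ^ (n / 2) * 2 ^ (n / 2) := Nat.mul_le_mul_right _ (hφ n)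
        _ = 2 ^ (n / 2 + n / 2) := (pow_add 2 _ _).symm
        _ ≤ 2 ^ n := Nat.pow_le_pow_right two_pos (by omega)
    rw [div_pow, one_pow, div_le_div_iff₀ (by positivity) (by positivity), one_mul]
    exact_mod_cast hnat
  exact squeeze_zero (fun n => by positivity) hbound
    ((tendsto_pow_atTop_nhds_zero_of_lt_one (by norm_num) (by norm_num)).comp
      (Nat.tendsto_div_const_atTop two_ne_zero))

lemma lcal_le_mk {h : ℕ → ℕ} {Φ : Set Slalom} (hΦ : ∀ φ ∈ Φ, ∀ n, (φ n).card ≤ 2 ^ n)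
    (hcov : IsCovering h Φ) : lcal h ≤ Cardinal.mk Φ :=
  csInf_le' ⟨Φ, hΦ, hcov, rfl⟩

lemma lcal'_le_mk {h : ℕ → ℕ} {Φ : Set Slalom} (hΦ : ∀ φ ∈ Φ, SPlus φ)
    (hcov : IsCovering h Φ) : lcal' h ≤ Cardinal.mk Φ :=
  csInf_le' ⟨Φ, hΦ, hcov, rfl⟩

lemma exists_isCovering_mk_eq_lcal (h : ℕ → ℕ) :
    ∃ Φ : Set Slalom, (∀ φ ∈ Φ, ∀ n, (φ n).card ≤ 2 ^ n) ∧ IsCovering h Φ ∧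
      Cardinal.mk Φ = lcal h := by
  refine csInf_mem (s := {c | ∃ Φ : Set Slalom, (∀ φ ∈ Φ, ∀ n, (φ n).card ≤ 2 ^ n) ∧
    IsCovering h Φ ∧ Cardinal.mk Φ = c}) ⟨_, _, ?_, isCovering_range_singleton h, rfl⟩
  rintro φ ⟨f, rfl⟩ n
  simpa using Nat.one_le_two_pow

lemma exists_isCovering_mk_eq_lcal' (h : ℕ → ℕ) :
    ∃ Φ : Set Slalom, (∀ φ ∈ Φ, SPlus φ) ∧ IsCovering h Φ ∧ Cardinal.mk Φ = lcal' h := by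
  refine csInf_mem (s := {c | ∃ Φ : Set Slalom, (∀ φ ∈ Φ, SPlus φ) ∧ IsCovering h Φ ∧
    Cardinal.mk Φ = c}) ⟨_, _, ?_, isCovering_range_singleton h, rfl⟩
  rintro φ ⟨f, rfl⟩
  exact sPlus_of_card_le_two_pow_half fun n => by simpa using Nat.one_le_two_pow

lemma lcal_le_lcal' (h : ℕ → ℕ) : lcal h ≤ lcal' h := by
  obtain ⟨Φ, hΦ, hcov, hmk⟩ := exists_isCovering_mk_eq_lcal' h
  exact hmk ▸ lcal_le_mk (fun φ hφ => (hΦ φ hφ).1) hcov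

section PairCoding

variable (h : ℕ → ℕ)

def pairCode (f : ℕ → ℕ) (m : ℕ) : ℕ := f (2 * m) + h (2 * m) * f (2 * m + 1)

/-- For odd `n`, `n - 1 = 2 * (n / 2)` is the even coordinate paired with `n`. -/
def pairDecode (n x : ℕ) : ℕ := if n % 2 = 0 then x % h n else x / h (n - 1)

def decodeSlalom (φ : Slalom) : Slalom := fun n => (φ (n / 2)).image (pairDecode h n)

variable {h}

lemma pairCode_lt {f : ℕ → ℕ} (hf : ∀ n, f n < h n) (m : ℕ) :
    pairCode h f m < h (2 * m) * h (2 * m + 1) :=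
  calc f (2 * m) + h (2 * m) * f (2 * m + 1) < h (2 * m) + h (2 * m) * f (2 * m + 1) := by
        gcongr; exact hf _
    _ = h (2 * m) * (f (2 * m + 1) + 1) := by ring
    _ ≤ h (2 * m) * h (2 * m + 1) := Nat.mul_le_mul_left _ (hf _)

lemma pairDecode_pairCode {f : ℕ → ℕ} (hf : ∀ n, f n < h n) (n : ℕ) :
    pairDecode h n (pairCode h f (n / 2)) = f n := by
  unfold pairDecode pairCode
  split_ifs with hn
  · obtain ⟨m, rfl⟩ : ∃ m, n = 2 * m := ⟨n / 2, by omega⟩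
    rw [Nat.mul_div_cancel_left m two_pos, Nat.add_mul_mod_self_left, Nat.mod_eq_of_lt (hf _)]
  · obtain ⟨m, rfl⟩ : ∃ m, n = 2 * m + 1 := ⟨n / 2, by omega⟩
    have hm : (2 * m + 1) / 2 = m := by omega
    rw [hm, Nat.add_sub_cancel, Nat.add_mul_div_left _ _ ((Nat.zero_le _).trans_lt (hf _)),
      Nat.div_eq_of_lt (hf _), zero_add]

lemma card_decodeSlalom_le (φ : Slalom) (n : ℕ) :
    (decodeSlalom h φ n).card ≤ (φ (n / 2)).card :=
  Finset.card_image_le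

lemma fSq_decodeSlalom {f : ℕ → ℕ} (hf : ∀ n, f n < h n) {φ : Slalom}
    (hφ : fSq (pairCode h f) φ) : fSq f (decodeSlalom h φ) := by
  filter_upwards [(Nat.tendsto_div_const_atTop two_ne_zero).eventually hφ] with n hn
  exact Finset.mem_image.mpr ⟨_, hn, pairDecode_pairCode hf n⟩

lemma isCovering_image_decodeSlalom {Φ : Set Slalom}
    (hcov : IsCovering (fun m => h (2 * m) * h (2 * m + 1)) Φ) :
    IsCovering h (decodeSlalom h '' Φ) := fun f hf =>
  let ⟨_, hφΦ, hφ⟩ := hcov (pairCode h f) (pairCode_lt hf)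
  ⟨_, Set.mem_image_of_mem _ hφΦ, fSq_decodeSlalom hf hφ⟩

end PairCoding

lemma lcal'_le_lcal_mul_consecutive (h : ℕ → ℕ) :
    lcal' h ≤ lcal (fun m => h (2 * m) * h (2 * m + 1)) := by
  obtain ⟨Φ, hΦ, hcov, hmk⟩ := exists_isCovering_mk_eq_lcal (fun m => h (2 * m) * h (2 * m + 1))
  have hS : ∀ ψ ∈ decodeSlalom h '' Φ, SPlus ψ := by
    rintro ψ ⟨φ, hφ, rfl⟩
    exact sPlus_of_card_le_two_pow_half fun n =>
      (card_decodeSlalom_le φ n).trans (hΦ φ hφ (n / 2))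
  calc lcal' h ≤ Cardinal.mk (decodeSlalom h '' Φ) :=
        lcal'_le_mk hS (isCovering_image_decodeSlalom hcov)
    _ ≤ Cardinal.mk Φ := Cardinal.mk_image_le
    _ = _ := hmk

theorem stmt2 :
    (∀ h : ℕ → ℕ, ∃ hs : ℕ → ℕ, lcal' h ≤ lcal hs) ∧
    (⨆ h : ℕ → ℕ, lcal' h) = ⨆ h : ℕ → ℕ, lcal h := by
  have hle : ∀ h : ℕ → ℕ, ∃ hs : ℕ → ℕ, lcal' h ≤ lcal hs :=
    fun h => ⟨_, lcal'_le_lcal_mul_consecutive h⟩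
  refine ⟨hle, le_antisymm (ciSup_le fun h => ?_) (ciSup_le fun h => ?_)⟩
  · obtain ⟨hs, hhs⟩ := hle h
    exact hhs.trans (le_ciSup Cardinal.bddAbove_of_small hs)
  · exact (lcal_le_lcal' h).trans (le_ciSup Cardinal.bddAbove_of_small h)
end

section
/- Suppose every family F ⊆ ω^ω of size κ is bounded with respect to ≤* and every family of κ functions in ω^ω is localized by a single slalom in S (i.e., add(N)-style localization holds at κ, via Bartoszyński's characterization). Then for every family Φ ⊆ S^+ with |Φ| ≤ κ there exists ψ ∈ S^+ such that φ(n) ⊆ ψ(n) for all but finitely many n, for every φ ∈ Φ. (Formal version: if κ < add(N), then S^+ is <add(N)-directed under ⊑, where ⊑ is eventual coordinatewise inclusion.) -/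
open Filter

/-!
The decay rates of the members of `Φ` form a family of size `≤ κ < 𝔟`, so one rate dominates
them all: there is `d → ∞` with `|φ n| * 2 ^ d n ≤ 2 ^ n` eventually, for every `φ ∈ Φ`.
Coding the values of `φ` on each (finite) block where `d n / 2` is constant by one natural number
and localizing these codes by a single slalom in `S` leaves, at each `n`, at most `2 ^ (d n / 2)`
candidates for `φ n`. The union `ψ n` of the candidates of size at most `2 ^ n / 4 ^ (d n / 2)`
then has size at most `2 ^ n / 2 ^ (d n / 2)`, so `ψ ∈ S⁺`, and `ψ` eventually covers every `φ ∈ Φ`.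
-/

/-- `κ < 𝔟` -/
def SmallFamiliesBounded (κ : Cardinal) : Prop :=
  ∀ F : Set (ℕ → ℕ), Cardinal.mk F ≤ κ → ∃ g : ℕ → ℕ, ∀ f ∈ F, ∀ᶠ n in atTop, f n ≤ g n

/-- `κ < add(N)`, by Bartoszyński's characterization -/
def SmallFamiliesLocalized (κ : Cardinal) : Prop :=
  ∀ F : Set (ℕ → ℕ), Cardinal.mk F ≤ κ →
    ∃ φ : Slalom, (∀ n, (φ n).card ≤ 2 ^ n) ∧ ∀ f ∈ F, fSq f φ

theorem exists_tendsto_atTop_eventually_comp_le (g : ℕ → ℕ) :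
    ∃ d : ℕ → ℕ, Tendsto d atTop atTop ∧ ∀ᶠ n in atTop, g (d n) ≤ n := by
  classical
  refine ⟨fun n => Nat.findGreatest (fun j => g j ≤ n) n, ?_, ?_⟩
  · refine tendsto_atTop.2 fun J => ?_
    filter_upwards [eventually_ge_atTop J, eventually_ge_atTop (g J)] with n hJ hgJ
    exact Nat.le_findGreatest hJ hgJ
  · filter_upwards [eventually_ge_atTop (g 0)] with n hn
    exact Nat.findGreatest_spec (P := fun j => g j ≤ n) (Nat.zero_le n) hn

theorem SmallFamiliesBounded.exists_tendsto_atTop_eventually_comp_le {κ : Cardinal}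
    (hb : SmallFamiliesBounded κ) {F : Set (ℕ → ℕ)} (hF : Cardinal.mk F ≤ κ) :
    ∃ d : ℕ → ℕ, Tendsto d atTop atTop ∧ ∀ f ∈ F, ∀ᶠ n in atTop, f (d n) ≤ n := by
  obtain ⟨g, hg⟩ := hb F hF
  obtain ⟨d, hd, hgd⟩ := _root_.exists_tendsto_atTop_eventually_comp_le g
  refine ⟨d, hd, fun f hf => ?_⟩
  filter_upwards [hd.eventually (hg f hf), hgd] with n hfg hgn
  exact hfg.trans hgn

theorem SPlus.eventually_card_mul_pow_le {φ : Slalom} (hφ : SPlus φ) (j : ℕ) :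
    ∀ᶠ n in atTop, (φ n).card * 2 ^ j ≤ 2 ^ n := by
  filter_upwards [hφ.2.eventually (gt_mem_nhds (by positivity : (0 : ℝ) < 1 / 2 ^ j))] with n hn
  rw [div_lt_div_iff₀ (by positivity) (by positivity), one_mul] at hn
  exact_mod_cast hn.le

theorem SPlus_of_card_mul_pow_le {ψ : Slalom} {k : ℕ → ℕ} (hk : Tendsto k atTop atTop)
    (hψ : ∀ n, (ψ n).card * 2 ^ k n ≤ 2 ^ n) : SPlus ψ := by
  refine ⟨fun n => (Nat.le_mul_of_pos_right _ (by positivity)).trans (hψ n), ?_⟩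
  have hinv : Tendsto (fun n => ((2 : ℝ) ^ k n)⁻¹) atTop (nhds 0) :=
    tendsto_inv_atTop_zero.comp ((tendsto_pow_atTop_atTop_of_one_lt one_lt_two).comp hk)
  refine squeeze_zero (fun n => by positivity) (fun n => ?_) hinv
  rw [← one_div, div_le_div_iff₀ (by positivity) (by positivity), one_mul]
  exact_mod_cast hψ n

theorem SmallFamiliesBounded.exists_uniform_decay {κ : Cardinal} (hb : SmallFamiliesBounded κ)
    {Φ : Set Slalom} (hΦ : ∀ φ ∈ Φ, SPlus φ) (hcard : Cardinal.mk Φ ≤ κ) :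
    ∃ d : ℕ → ℕ, Tendsto d atTop atTop ∧
      ∀ φ ∈ Φ, ∀ᶠ n in atTop, (φ n).card * 2 ^ d n ≤ 2 ^ n := by
  have hrate : ∀ φ : Φ, ∀ j, ∃ N, ∀ n ≥ N, (φ.1 n).card * 2 ^ j ≤ 2 ^ n := fun φ j =>
    eventually_atTop.1 ((hΦ φ φ.2).eventually_card_mul_pow_le j)
  choose rate hrate using hrate
  obtain ⟨d, hd, hdrate⟩ :=
    hb.exists_tendsto_atTop_eventually_comp_le (Cardinal.mk_range_le.trans hcard)
  refine ⟨d, hd, fun φ hφ => ?_⟩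
  filter_upwards [hdrate _ (Set.mem_range_self ⟨φ, hφ⟩)] with n hn
  exact hrate ⟨φ, hφ⟩ (d n) n hn

theorem SmallFamiliesLocalized.exists_localizing {κ : Cardinal} (hl : SmallFamiliesLocalized κ)
    {β : Type} [Encodable β] [Inhabited β] [DecidableEq β] {k : ℕ → ℕ}
    (hk : Tendsto k atTop atTop) {Φ : Set (ℕ → β)} (hcard : Cardinal.mk Φ ≤ κ) :
    ∃ C : ℕ → Finset β, (∀ n, (C n).card ≤ 2 ^ k n) ∧ ∀ φ ∈ Φ, ∀ᶠ n in atTop, φ n ∈ C n := by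
  have hblock : ∀ K, ∃ M, ∀ n, k n ≤ K → n < M := fun K => by
    obtain ⟨M, hM⟩ := eventually_atTop.1 (tendsto_atTop.1 hk (K + 1))
    exact ⟨M, fun n hn => by_contra fun h => by have := hM n (not_lt.1 h); omega⟩
  choose M hM using hblock
  let code : (ℕ → β) → ℕ → ℕ := fun φ K => Encodable.encode ((List.range (M K)).map φ)
  let read : ℕ → ℕ → β := fun c n =>
    ((Encodable.decode c : Option (List β)).getD []).getD n default
  obtain ⟨χ, hχcard, hχ⟩ := hl (code '' Φ) (Cardinal.mk_image_le.trans hcard)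
  refine ⟨fun n => (χ (k n)).image (read · n),
    fun n => Finset.card_image_le.trans (hχcard _), fun φ hφ => ?_⟩
  filter_upwards [hk.eventually (hχ _ (Set.mem_image_of_mem _ hφ))] with n hn
  refine Finset.mem_image.2 ⟨_, hn, ?_⟩
  simp [read, code, Encodable.encodek, hM (k n) n le_rfl]

def unionOfSmall (C : ℕ → Finset (Finset ℕ)) (k : ℕ → ℕ) : Slalom := fun n =>
  ((C n).filter fun s => s.card * 4 ^ k n ≤ 2 ^ n).biUnion id

theorem subset_unionOfSmall {C : ℕ → Finset (Finset ℕ)} {k : ℕ → ℕ} {n : ℕ} {s : Finset ℕ}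
    (hs : s ∈ C n) (hsmall : s.card * 4 ^ k n ≤ 2 ^ n) : s ⊆ unionOfSmall C k n :=
  Finset.subset_biUnion_of_mem id (Finset.mem_filter.2 ⟨hs, hsmall⟩)

theorem card_unionOfSmall_mul_pow_le {C : ℕ → Finset (Finset ℕ)} {k : ℕ → ℕ}
    (hC : ∀ n, (C n).card ≤ 2 ^ k n) (n : ℕ) :
    (unionOfSmall C k n).card * 2 ^ k n ≤ 2 ^ n := by
  set small := (C n).filter fun s => s.card * 4 ^ k n ≤ 2 ^ n
  have h : (unionOfSmall C k n).card * 4 ^ k n ≤ 2 ^ k n * 2 ^ n := calc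
    _ ≤ (∑ s ∈ small, s.card) * 4 ^ k n := by gcongr; exact Finset.card_biUnion_le
    _ = ∑ s ∈ small, s.card * 4 ^ k n := Finset.sum_mul _ _ _
    _ ≤ ∑ _s ∈ small, 2 ^ n := Finset.sum_le_sum fun s hs => (Finset.mem_filter.1 hs).2
    _ = small.card * 2 ^ n := by rw [Finset.sum_const, smul_eq_mul]
    _ ≤ 2 ^ k n * 2 ^ n := by gcongr; exact (Finset.card_filter_le _ _).trans (hC n)
  rw [show (4 : ℕ) ^ k n = 2 ^ k n * 2 ^ k n by rw [← mul_pow]; norm_num, ← mul_assoc,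
    mul_comm (2 ^ k n) (2 ^ n)] at h
  exact Nat.le_of_mul_le_mul_right h (by positivity)

theorem stmt5 (κ : Cardinal)
    (hb : ∀ F : Set (ℕ → ℕ), Cardinal.mk F ≤ κ →
      ∃ g : ℕ → ℕ, ∀ f ∈ F, ∀ᶠ n in atTop, f n ≤ g n)
    (hl : ∀ F : Set (ℕ → ℕ), Cardinal.mk F ≤ κ →
      ∃ φ : Slalom, (∀ n, (φ n).card ≤ 2 ^ n) ∧ ∀ f ∈ F, fSq f φ) :
    ∀ Φ : Set Slalom, (∀ φ ∈ Φ, SPlus φ) → Cardinal.mk Φ ≤ κ →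
      ∃ ψ : Slalom, SPlus ψ ∧ ∀ φ ∈ Φ, SqS φ ψ := by
  intro Φ hΦ hcard
  obtain ⟨d, hd, hdecay⟩ := SmallFamiliesBounded.exists_uniform_decay hb hΦ hcard
  let k := fun n => d n / 2
  have hk : Tendsto k atTop atTop := (Nat.tendsto_div_const_atTop two_ne_zero).comp hd
  obtain ⟨C, hCcard, hC⟩ := SmallFamiliesLocalized.exists_localizing (β := Finset ℕ) hl hk hcard
  refine ⟨unionOfSmall C k, SPlus_of_card_mul_pow_le hk (card_unionOfSmall_mul_pow_le hCcard),
    fun φ hφ => ?_⟩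
  filter_upwards [hC φ hφ, hdecay φ hφ] with n hmem hsmall
  refine subset_unionOfSmall hmem (le_trans ?_ hsmall)
  calc (φ n).card * 4 ^ k n = (φ n).card * 2 ^ (2 * k n) := by rw [pow_mul]; norm_num
    _ ≤ (φ n).card * 2 ^ d n := by gcongr; exacts [one_le_two, Nat.mul_div_le (d n) 2]
end
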